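/- arXiv:1403.4895 — 2 statements merged into one kernel-verified Lean document; each statement's English description precedes it below -/
import Mathlib

section
/- Let N ≥ 3 be a fixed integer, and for each ε ∈ (0,1/3] let Y^{(ε)} = (Y^{(ε)}_k, k ∈ ℤ) be a strictly stationary Markov chain satisfying Condition S(N,ε). Then lim_{ε→0+} ρ(σ(Y^{(ε)}_0), σ(Y^{(ε)}_1)) = 0, i.e. the maximal correlation coefficient ρ(Y^{(ε)},1) tends to 0 as ε → 0+. -/
open MeasureTheory ProbabilityTheory Filter Set
open scoped ENNReal Topology

/-! For random variables `X`, `Z` with finitely many values, the covariance of `a ∘ X` and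
`b ∘ Z` is a bilinear form in the centred values `a x - E[a ∘ X]`, `b y - E[b ∘ Z]` against the
matrix `r x y - p x * q y` (joint law minus product of marginals), because the centred values
have mean zero. Hence `ρ(σ(X), σ(Z)) ≤ δ |s| |t|` as soon as every cell satisfies
`|r x y - p x q y| ≤ δ √(p x q y)`.

Under Condition S(N,ε) every state other than `0` has probability at most `2Nε`, so off the
cell `(0,0)` the product `p q` is small; and each nonzero off-diagonal cell `(i, i ± 1)` is at
most `2ε` times an entry in its row and in its column (the preceding edge of the path
`0 - 1 - ⋯ - N`, or the cell `(0,0)` of mass at least `1/2`). This gives the cell bound with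
`δ = 2 √((N+1)ε)`, which tends to `0`. -/

noncomputable section

variable {Ω : Type*}

/-- The σ-field generated by the random variables `X k`, `k ∈ S`. -/
def sigmaOf [MeasurableSpace Ω] (X : ℤ → Ω → ℝ) (S : Set ℤ) : MeasurableSpace Ω :=
  ⨆ k ∈ S, MeasurableSpace.comap (X k) inferInstance

/-- A sequence indexed by `ℤ` is strictly stationary if its law (as a measure on `ℤ → ℝ`)
is invariant under the index shift. -/
def StrictlyStationary [MeasurableSpace Ω] (P : Measure Ω) (X : ℤ → Ω → ℝ) : Prop :=
  ∀ n : ℤ, Measure.map (fun ω => fun k : ℤ => X (k + n) ω) P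
    = Measure.map (fun ω => fun k : ℤ => X k ω) P

/-- Markov chain: for each `k`, the past `σ(X_j, j ≤ k)` and the future `σ(X_j, j ≥ k)`
are conditionally independent given the present `σ(X_k)`. -/
def IsMarkovChain [MeasurableSpace Ω] (P : Measure Ω) (X : ℤ → Ω → ℝ) : Prop :=
  (∀ k, Measurable (X k)) ∧
  ∀ k : ℤ, ∀ A B : Set Ω, MeasurableSet[sigmaOf X (Set.Iic k)] A →
    MeasurableSet[sigmaOf X (Set.Ici k)] B →
    (fun ω => (P[A.indicator (fun _ => (1:ℝ)) | sigmaOf X {k}]) ω *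
              (P[B.indicator (fun _ => (1:ℝ)) | sigmaOf X {k}]) ω)
      =ᵐ[P] P[(A ∩ B).indicator (fun _ => (1:ℝ)) | sigmaOf X {k}]

/-- Covariance of two real random variables. -/
def covP [MeasurableSpace Ω] (P : Measure Ω) (f g : Ω → ℝ) : ℝ :=
  ∫ ω, (f ω - ∫ x, f x ∂P) * (g ω - ∫ x, g x ∂P) ∂P

/-- Correlation coefficient of two real random variables (with the convention 0/0 = 0). -/
def corrP [MeasurableSpace Ω] (P : Measure Ω) (f g : Ω → ℝ) : ℝ :=
  covP P f g / (Real.sqrt (covP P f f) * Real.sqrt (covP P g g))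

/-- Maximal correlation coefficient ρ(𝒜,ℬ): the supremum of |Corr(f,g)| over square-integrable
`f` measurable w.r.t. `mA` and `g` measurable w.r.t. `mB`. -/
def maxCorr (mA mB : MeasurableSpace Ω) [MeasurableSpace Ω] (P : Measure Ω) : ℝ :=
  sSup {r : ℝ | ∃ f g : Ω → ℝ, Measurable[mA] f ∧ Measurable[mB] g ∧
    MemLp f 2 P ∧ MemLp g 2 P ∧ r = |corrP P f g|}

/-- η(A,B) = P(A∩B)/(P(A)P(B)) (with the convention 0/0 = 0). -/
def etaP [MeasurableSpace Ω] (P : Measure Ω) (A B : Set Ω) : ℝ :=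
  (P (A ∩ B)).toReal / ((P A).toReal * (P B).toReal)

/-- ψ dependence coefficient, with values in `[0,∞]`. -/
def psiDep (mA mB : MeasurableSpace Ω) [MeasurableSpace Ω] (P : Measure Ω) : ℝ≥0∞ :=
  ⨆ (A : Set Ω) (B : Set Ω) (_ : MeasurableSet[mA] A) (_ : MeasurableSet[mB] B)
    (_ : 0 < P A) (_ : 0 < P B), ENNReal.ofReal |etaP P A B - 1|

/-- A finite partition of `Ω` into `m`-measurable events of positive probability. -/
def IsFinPartition (m : MeasurableSpace Ω) [MeasurableSpace Ω] (P : Measure Ω)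
    {n : ℕ} (A : Fin n → Set Ω) : Prop :=
  (∀ i, MeasurableSet[m] (A i)) ∧ (∀ i, 0 < P (A i)) ∧
  (Pairwise fun i j => Disjoint (A i) (A j)) ∧ (⋃ i, A i) = Set.univ

/-- Coefficient of information I(𝒜,ℬ), valued in `[0,∞]`
(note `Real.log 0 = 0`, so `0 log 0 = 0` automatically). -/
def infoCoef (mA mB : MeasurableSpace Ω) [MeasurableSpace Ω] (P : Measure Ω) : ℝ≥0∞ :=
  ⨆ (nI : ℕ) (nJ : ℕ) (A : Fin nI → Set Ω) (B : Fin nJ → Set Ω)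
    (_ : IsFinPartition mA P A) (_ : IsFinPartition mB P B),
    ENNReal.ofReal (∑ i, ∑ j,
      (P (A i)).toReal * (P (B j)).toReal *
        (etaP P (A i) (B j) * Real.log (etaP P (A i) (B j))))

/-- β dependence coefficient (absolute regularity coefficient). -/
def betaDep (mA mB : MeasurableSpace Ω) [MeasurableSpace Ω] (P : Measure Ω) : ℝ :=
  sSup {r : ℝ | ∃ (nI nJ : ℕ) (A : Fin nI → Set Ω) (B : Fin nJ → Set Ω),
    IsFinPartition mA P A ∧ IsFinPartition mB P B ∧
    r = (1/2) * ∑ i, ∑ j,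
      |(P (A i ∩ B j)).toReal - (P (A i)).toReal * (P (B j)).toReal|}

/-- ρ(X,n) -/
def rhoMix [MeasurableSpace Ω] (P : Measure Ω) (X : ℤ → Ω → ℝ) (n : ℕ) : ℝ :=
  maxCorr (sigmaOf X (Set.Iic 0)) (sigmaOf X (Set.Ici (n:ℤ))) P

/-- β(X,n) -/
def betaMix [MeasurableSpace Ω] (P : Measure Ω) (X : ℤ → Ω → ℝ) (n : ℕ) : ℝ :=
  betaDep (sigmaOf X (Set.Iic 0)) (sigmaOf X (Set.Ici (n:ℤ))) P

/-- I(X,n) -/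
def infoMix [MeasurableSpace Ω] (P : Measure Ω) (X : ℤ → Ω → ℝ) (n : ℕ) : ℝ≥0∞ :=
  infoCoef (sigmaOf X (Set.Iic 0)) (sigmaOf X (Set.Ici (n:ℤ))) P

/-- ψ(X,n) -/
def psiMix [MeasurableSpace Ω] (P : Measure Ω) (X : ℤ → Ω → ℝ) (n : ℕ) : ℝ≥0∞ :=
  psiDep (sigmaOf X (Set.Iic 0)) (sigmaOf X (Set.Ici (n:ℤ))) P

/-- Interlaced maximal correlation coefficient ρ*(X,n): the supremum of
ρ(σ(X_k, k ∈ S), σ(X_k, k ∈ T)) over nonempty disjoint S, T ⊂ ℤ with dist(S,T) ≥ n. -/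
def rhoStar [MeasurableSpace Ω] (P : Measure Ω) (X : ℤ → Ω → ℝ) (n : ℕ) : ℝ :=
  sSup {r : ℝ | ∃ S T : Set ℤ, S.Nonempty ∧ T.Nonempty ∧ Disjoint S T ∧
    (∀ s ∈ S, ∀ t ∈ T, (n:ℤ) ≤ |s - t|) ∧ r = maxCorr (sigmaOf X S) (sigmaOf X T) P}

/-- Condition S(N,ε) of Definition 2.1: a strictly stationary Markov chain with state space
`{0,1,...,N}` (as reals) whose joint law of `(Y_0, Y_1)` is as prescribed. -/
def ConditionS [MeasurableSpace Ω] (P : Measure Ω) (N : ℕ) (ε : ℝ) (Y : ℤ → Ω → ℝ) : Prop :=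
  StrictlyStationary P Y ∧ IsMarkovChain P Y ∧
  (∀ᵐ ω ∂P, ∃ i : ℕ, i ≤ N ∧ Y 0 ω = (i:ℝ)) ∧
  (P {ω | Y 0 ω = 0 ∧ Y 1 ω = 0}).toReal
      = 1 - 2 * (ε^(2*N-1) + ∑ u ∈ Finset.Icc 1 (N-1), ε^(2*u)) ∧
  (∀ m : ℕ, 1 ≤ m → m ≤ N - 1 →
    (P {ω | Y 0 ω = (m:ℝ) - 1 ∧ Y 1 ω = (m:ℝ)}).toReal = ε^(2*m) ∧
    (P {ω | Y 0 ω = (m:ℝ) ∧ Y 1 ω = (m:ℝ) - 1}).toReal = ε^(2*m)) ∧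
  (P {ω | Y 0 ω = (N:ℝ) - 1 ∧ Y 1 ω = (N:ℝ)}).toReal = ε^(2*N-1) ∧
  (P {ω | Y 0 ω = (N:ℝ) ∧ Y 1 ω = (N:ℝ) - 1}).toReal = ε^(2*N-1) ∧
  (∀ i j : ℕ, i ≤ N → j ≤ N → ((i = j ∧ 1 ≤ i) ∨ 2 ≤ |(i:ℤ) - (j:ℤ)|) →
    P {ω | Y 0 ω = (i:ℝ) ∧ Y 1 ω = (j:ℝ)} = 0)

/-- `m`-step transition probability `P(Y_m = j | Y_0 = i)` (with the convention 0/0 = 0). -/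
def transProb [MeasurableSpace Ω] (P : Measure Ω) (Y : ℤ → Ω → ℝ) (m : ℕ) (i j : ℕ) : ℝ :=
  (P {ω | Y 0 ω = (i:ℝ) ∧ Y (m:ℤ) ω = (j:ℝ)}).toReal / (P {ω | Y 0 ω = (i:ℝ)}).toReal

lemma sigmaOf_singleton [MeasurableSpace Ω] (X : ℤ → Ω → ℝ) (k : ℤ) :
    sigmaOf X {k} = MeasurableSpace.comap (X k) inferInstance := by
  simp [sigmaOf]

lemma StrictlyStationary.map_eq_map_zero [MeasurableSpace Ω] {P : Measure Ω} {X : ℤ → Ω → ℝ}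
    (h : StrictlyStationary P X) (hX : ∀ k, Measurable (X k)) (n : ℤ) :
    P.map (X n) = P.map (X 0) := by
  have hlaw := congrArg (Measure.map fun x : ℤ → ℝ => x 0) (h n)
  rw [Measure.map_map (measurable_pi_apply 0) (measurable_pi_lambda _ fun k => hX (k + n)),
    Measure.map_map (measurable_pi_apply 0) (measurable_pi_lambda _ hX)] at hlaw
  simpa only [Function.comp_def, zero_add] using hlaw

lemma maxCorr_nonneg (mA mB : MeasurableSpace Ω) [MeasurableSpace Ω] (P : Measure Ω) :
    0 ≤ maxCorr mA mB P :=
  Real.sSup_nonneg <| by rintro _ ⟨f, g, -, -, -, -, rfl⟩; exact abs_nonneg _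

lemma maxCorr_le {mA mB : MeasurableSpace Ω} [MeasurableSpace Ω] {P : Measure Ω} {c : ℝ}
    (hc : 0 ≤ c) (h : ∀ f g : Ω → ℝ, Measurable[mA] f → Measurable[mB] g →
      MemLp f 2 P → MemLp g 2 P → |corrP P f g| ≤ c) :
    maxCorr mA mB P ≤ c :=
  Real.sSup_le (by rintro _ ⟨f, g, hf, hg, hf2, hg2, rfl⟩; exact h f g hf hg hf2 hg2) hc

lemma abs_corrP_le_of_abs_covP_le [MeasurableSpace Ω] {P : Measure Ω} {f g : Ω → ℝ} {c : ℝ}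
    (hc : 0 ≤ c) (h : |covP P f g| ≤ c * (√(covP P f f) * √(covP P g g))) :
    |corrP P f g| ≤ c := by
  rw [corrP, abs_div, abs_of_nonneg (mul_nonneg (Real.sqrt_nonneg _) (Real.sqrt_nonneg _))]
  exact div_le_of_le_mul₀ (by positivity) hc h

lemma abs_mul_sqrt_le_sqrt_sum_sq_mul {ι : Type*} {s : Finset ι} {u p : ι → ℝ}
    (hp : ∀ i ∈ s, 0 ≤ p i) {i : ι} (hi : i ∈ s) :
    |u i| * √(p i) ≤ √(∑ j ∈ s, u j ^ 2 * p j) := by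
  rw [← Real.sqrt_sq_eq_abs, ← Real.sqrt_mul (sq_nonneg _)]
  exact Real.sqrt_le_sqrt <|
    Finset.single_le_sum (f := fun j => u j ^ 2 * p j)
      (fun j hj => mul_nonneg (sq_nonneg _) (hp j hj)) hi

lemma abs_sum_sum_mul_le_of_abs_sub_mul_le {ι κ : Type*} {s : Finset ι} {t : Finset κ}
    {u p : ι → ℝ} {v q : κ → ℝ} {r : ι → κ → ℝ} {δ : ℝ} (hδ : 0 ≤ δ)
    (hp : ∀ i ∈ s, 0 ≤ p i) (hq : ∀ j ∈ t, 0 ≤ q j) (hu : ∑ i ∈ s, u i * p i = 0)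
    (hr : ∀ i ∈ s, ∀ j ∈ t, |r i j - p i * q j| ≤ δ * √(p i * q j)) :
    |∑ i ∈ s, ∑ j ∈ t, u i * v j * r i j| ≤
      δ * s.card * t.card * (√(∑ i ∈ s, u i ^ 2 * p i) * √(∑ j ∈ t, v j ^ 2 * q j)) := by
  set U := √(∑ i ∈ s, u i ^ 2 * p i)
  set W := √(∑ j ∈ t, v j ^ 2 * q j)
  have hproduct : ∑ i ∈ s, ∑ j ∈ t, u i * v j * (p i * q j) = 0 := by
    simp only [show ∀ i j, u i * v j * (p i * q j) = u i * p i * (v j * q j) from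
      fun i j => by ring, ← Finset.sum_mul_sum, hu, zero_mul]
  have hcentered : ∑ i ∈ s, ∑ j ∈ t, u i * v j * r i j =
      ∑ i ∈ s, ∑ j ∈ t, u i * v j * (r i j - p i * q j) := by
    simp only [mul_sub, Finset.sum_sub_distrib, hproduct, sub_zero]
  have hterm : ∀ i ∈ s, ∀ j ∈ t, |u i * v j * (r i j - p i * q j)| ≤ δ * (U * W) := by
    intro i hi j hj
    calc |u i * v j * (r i j - p i * q j)|
        = |u i| * |v j| * |r i j - p i * q j| := by rw [abs_mul, abs_mul]
      _ ≤ |u i| * |v j| * (δ * (√(p i) * √(q j))) := by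
          rw [← Real.sqrt_mul (hp i hi)]; gcongr; exact hr i hi j hj
      _ = δ * ((|u i| * √(p i)) * (|v j| * √(q j))) := by ring
      _ ≤ δ * (U * W) := by
          gcongr
          · exact abs_mul_sqrt_le_sqrt_sum_sq_mul hp hi
          · exact abs_mul_sqrt_le_sqrt_sum_sq_mul hq hj
  calc |∑ i ∈ s, ∑ j ∈ t, u i * v j * r i j|
      ≤ ∑ i ∈ s, ∑ j ∈ t, |u i * v j * (r i j - p i * q j)| := by
        rw [hcentered]
        exact (Finset.abs_sum_le_sum_abs _ _).trans
          (Finset.sum_le_sum fun i _ => Finset.abs_sum_le_sum_abs _ _)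
    _ ≤ ∑ i ∈ s, ∑ j ∈ t, δ * (U * W) :=
        Finset.sum_le_sum fun i hi => Finset.sum_le_sum fun j hj => hterm i hi j hj
    _ = δ * s.card * t.card * (U * W) := by simp only [Finset.sum_const, nsmul_eq_mul]; ring

section FiniteValued

variable [MeasurableSpace Ω] {P : Measure Ω} {α β : Type*} [MeasurableSpace α]
  [MeasurableSingletonClass α] [MeasurableSpace β] [MeasurableSingletonClass β]
  {X : Ω → α} {Z : Ω → β} {s : Finset α} {t : Finset β}

lemma integral_comp_eq_sum_of_ae_mem [IsFiniteMeasure P] (hX : Measurable X)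
    (hXs : ∀ᵐ ω ∂P, X ω ∈ s) (F : α → ℝ) :
    ∫ ω, F (X ω) ∂P = ∑ x ∈ s, F x * P.real (X ⁻¹' {x}) := by
  classical
  have hfiber : ∀ x, MeasurableSet (X ⁻¹' {x}) := fun x => hX (measurableSet_singleton x)
  have hsimple : (fun ω => F (X ω)) =ᵐ[P]
      fun ω => ∑ x ∈ s, (X ⁻¹' {x}).indicator (fun _ => F x) ω := by
    filter_upwards [hXs] with ω hω
    simp [Set.indicator_apply, eq_comm, hω]
  rw [integral_congr_ae hsimple,
    integral_finsetSum _ fun x _ => (integrable_const _).indicator (hfiber x)]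
  refine Finset.sum_congr rfl fun x _ => ?_
  rw [integral_indicator_const _ (hfiber x), smul_eq_mul, mul_comm]

lemma sum_sub_integral_mul_measureReal_eq_zero [IsProbabilityMeasure P] (hX : Measurable X)
    (hXs : ∀ᵐ ω ∂P, X ω ∈ s) (a : α → ℝ) :
    ∑ x ∈ s, (a x - ∫ ω, a (X ω) ∂P) * P.real (X ⁻¹' {x}) = 0 := by
  have hmass := integral_comp_eq_sum_of_ae_mem hX hXs fun _ => (1 : ℝ)
  simp only [integral_const, probReal_univ, smul_eq_mul, one_mul] at hmass
  simp only [sub_mul, Finset.sum_sub_distrib, ← Finset.mul_sum, ← hmass,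
    ← integral_comp_eq_sum_of_ae_mem hX hXs a, mul_one, sub_self]

lemma covP_comp_self_eq_sum [IsFiniteMeasure P] (hX : Measurable X) (hXs : ∀ᵐ ω ∂P, X ω ∈ s)
    (a : α → ℝ) :
    covP P (a ∘ X) (a ∘ X) = ∑ x ∈ s, (a x - ∫ ω, a (X ω) ∂P) ^ 2 * P.real (X ⁻¹' {x}) := by
  simp only [covP, Function.comp_apply, ← sq]
  exact integral_comp_eq_sum_of_ae_mem hX hXs fun x => (a x - ∫ ω, a (X ω) ∂P) ^ 2

lemma covP_comp_eq_sum [IsFiniteMeasure P] (hX : Measurable X) (hZ : Measurable Z)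
    (hXs : ∀ᵐ ω ∂P, X ω ∈ s) (hZt : ∀ᵐ ω ∂P, Z ω ∈ t) (a : α → ℝ) (b : β → ℝ) :
    covP P (a ∘ X) (b ∘ Z) = ∑ x ∈ s, ∑ y ∈ t,
      (a x - ∫ ω, a (X ω) ∂P) * (b y - ∫ ω, b (Z ω) ∂P) * P.real (X ⁻¹' {x} ∩ Z ⁻¹' {y}) := by
  have hXZ : ∀ᵐ ω ∂P, (X ω, Z ω) ∈ s ×ˢ t := by
    filter_upwards [hXs, hZt] with ω hx hz using Finset.mem_product.2 ⟨hx, hz⟩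
  simp only [covP, Function.comp_apply]
  rw [integral_comp_eq_sum_of_ae_mem (hX.prodMk hZ) hXZ
    fun z => (a z.1 - ∫ ω, a (X ω) ∂P) * (b z.2 - ∫ ω, b (Z ω) ∂P), Finset.sum_product]
  simp only [← Set.singleton_prod_singleton, Set.mk_preimage_prod]

lemma abs_corrP_le_of_abs_cell_sub_le [IsProbabilityMeasure P]
    (hX : Measurable X) (hZ : Measurable Z) (hXs : ∀ᵐ ω ∂P, X ω ∈ s) (hZt : ∀ᵐ ω ∂P, Z ω ∈ t)
    {δ : ℝ} (hδ : 0 ≤ δ)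
    (hcell : ∀ x ∈ s, ∀ y ∈ t,
      |P.real (X ⁻¹' {x} ∩ Z ⁻¹' {y}) - P.real (X ⁻¹' {x}) * P.real (Z ⁻¹' {y})| ≤
        δ * √(P.real (X ⁻¹' {x}) * P.real (Z ⁻¹' {y})))
    {f g : Ω → ℝ} (hf : Measurable[MeasurableSpace.comap X ‹_›] f)
    (hg : Measurable[MeasurableSpace.comap Z ‹_›] g) :
    |corrP P f g| ≤ δ * s.card * t.card := by
  obtain ⟨a, -, rfl⟩ := hf.exists_eq_measurable_comp
  obtain ⟨b, -, rfl⟩ := hg.exists_eq_measurable_comp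
  refine abs_corrP_le_of_abs_covP_le (by positivity) ?_
  rw [covP_comp_eq_sum hX hZ hXs hZt, covP_comp_self_eq_sum hX hXs,
    covP_comp_self_eq_sum hZ hZt]
  exact abs_sum_sum_mul_le_of_abs_sub_mul_le hδ (fun _ _ => measureReal_nonneg)
    (fun _ _ => measureReal_nonneg) (sum_sub_integral_mul_measureReal_eq_zero hX hXs a) hcell

end FiniteValued

lemma abs_sub_le_mul_sqrt_of_sq_le {r w δ : ℝ} (hr : 0 ≤ r) (hw : 0 ≤ w) (hδ : 0 ≤ δ)
    (hrw : r ^ 2 ≤ δ ^ 2 * w) (hwδ : w ≤ δ ^ 2) : |r - w| ≤ δ * √w := by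
  have hr' : r ≤ δ * √w := by
    rw [← Real.sqrt_sq hδ, ← Real.sqrt_mul (sq_nonneg δ)]
    exact Real.le_sqrt_of_sq_le hrw
  have hw' : w ≤ δ * √w := by
    calc w = √w * √w := (Real.mul_self_sqrt hw).symm
      _ ≤ δ * √w := by gcongr; exact (Real.sqrt_le_left hδ).2 hwδ
  exact abs_sub_le_of_nonneg_of_le hr hr' hw hw'

lemma abs_sub_mul_le_of_half_le {r p q : ℝ} (hrp : r ≤ p) (hrq : r ≤ q) (hp : p ≤ 1)
    (hq : q ≤ 1) (hr : 1 / 2 ≤ r) : |r - p * q| ≤ 2 * (1 - r) * √(p * q) := by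
  have hsq : r ^ 2 ≤ p * q := by rw [sq]; exact mul_le_mul hrp hrq (by linarith) (by linarith)
  have hr' : r ≤ √(p * q) := Real.le_sqrt_of_sq_le hsq
  rw [abs_le]
  constructor <;> nlinarith [mul_le_one₀ hp (by linarith) hq]

def stateSpace (N : ℕ) : Finset ℝ := (Finset.range (N + 1)).image fun i : ℕ => (i : ℝ)

lemma card_stateSpace (N : ℕ) : (stateSpace N).card = N + 1 := by
  rw [stateSpace, Finset.card_image_of_injective _ Nat.cast_injective, Finset.card_range]

namespace ConditionS

variable [MeasurableSpace Ω] {P : Measure Ω} {N : ℕ} {ε : ℝ} {Y : ℤ → Ω → ℝ}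

lemma measurable (h : ConditionS P N ε Y) (k : ℤ) : Measurable (Y k) := h.2.1.1 k

lemma ae_mem_stateSpace (h : ConditionS P N ε Y) (k : ℤ) :
    ∀ᵐ ω ∂P, Y k ω ∈ stateSpace N := by
  have hS : MeasurableSet {x : ℝ | x ∈ stateSpace N} := (stateSpace N).measurableSet
  rw [← ae_map_iff (h.measurable k).aemeasurable hS, h.1.map_eq_map_zero h.measurable,
    ae_map_iff (h.measurable 0).aemeasurable hS]
  exact h.2.2.1.mono fun ω ⟨i, hi, hYi⟩ =>
    Finset.mem_image.2 ⟨i, Finset.mem_range.2 (Nat.lt_succ_of_le hi), hYi.symm⟩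

lemma one_sub_cell_zero_zero_le (h : ConditionS P N ε Y) (hN : 1 ≤ N) (hε0 : 0 ≤ ε)
    (hε1 : ε ≤ 1) :
    1 - P.real (Y 0 ⁻¹' {0} ∩ Y 1 ⁻¹' {0}) ≤ 2 * N * ε := by
  have h00 : P.real (Y 0 ⁻¹' {0} ∩ Y 1 ⁻¹' {0}) =
      1 - 2 * (ε ^ (2 * N - 1) + ∑ u ∈ Finset.Icc 1 (N - 1), ε ^ (2 * u)) := h.2.2.2.1
  have hpow : ∀ k ≠ 0, ε ^ k ≤ ε := fun k hk => pow_le_of_le_one hε0 hε1 hk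
  have hsum : ∑ u ∈ Finset.Icc 1 (N - 1), ε ^ (2 * u) ≤ (N - 1 : ℕ) * ε := by
    have := Finset.sum_le_card_nsmul (Finset.Icc 1 (N - 1)) (fun u => ε ^ (2 * u)) ε
      fun u hu => hpow _ (by simp only [Finset.mem_Icc] at hu; omega)
    simpa using this
  have hlast := hpow (2 * N - 1) (by omega)
  rw [Nat.cast_sub hN, Nat.cast_one] at hsum
  linarith

lemma cell_succ_le (h : ConditionS P N ε Y) (hε0 : 0 ≤ ε) (hε1 : ε ≤ 1) {i : ℕ}
    (hi : i + 1 ≤ N) :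
    P.real (Y 0 ⁻¹' {(i : ℝ)} ∩ Y 1 ⁻¹' {((i + 1 : ℕ) : ℝ)}) ≤ ε ^ (2 * i + 1) ∧
    P.real (Y 0 ⁻¹' {((i + 1 : ℕ) : ℝ)} ∩ Y 1 ⁻¹' {(i : ℝ)}) ≤ ε ^ (2 * i + 1) := by
  obtain ⟨-, -, -, -, hinner, hlast, hlast', -⟩ := h
  rcases hi.lt_or_eq with hlt | rfl
  · obtain ⟨h1, h2⟩ := hinner (i + 1) (by omega) (by omega)
    have hle : ε ^ (2 * (i + 1)) ≤ ε ^ (2 * i + 1) := pow_le_pow_of_le_one hε0 hε1 (by omega)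
    push_cast at h1 h2 ⊢
    simp only [add_sub_cancel_right] at h1 h2
    exact ⟨h1.le.trans hle, h2.le.trans hle⟩
  · have e : 2 * (i + 1) - 1 = 2 * i + 1 := by omega
    push_cast at hlast hlast' ⊢
    simp only [add_sub_cancel_right, e] at hlast hlast'
    exact ⟨hlast.le, hlast'.le⟩

lemma cell_succ_eq (h : ConditionS P N ε Y) {i : ℕ} (hi : i + 2 ≤ N) :
    P.real (Y 0 ⁻¹' {(i : ℝ)} ∩ Y 1 ⁻¹' {((i + 1 : ℕ) : ℝ)}) = ε ^ (2 * i + 2) ∧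
    P.real (Y 0 ⁻¹' {((i + 1 : ℕ) : ℝ)} ∩ Y 1 ⁻¹' {(i : ℝ)}) = ε ^ (2 * i + 2) := by
  obtain ⟨h1, h2⟩ := h.2.2.2.2.1 (i + 1) (by omega) (by omega)
  push_cast at h1 h2 ⊢
  simp only [add_sub_cancel_right] at h1 h2
  exact ⟨h1, h2⟩

lemma cell_succ_le_two_mul (h : ConditionS P N ε Y) [IsFiniteMeasure P] (hε0 : 0 ≤ ε)
    (hε1 : ε ≤ 1) (h00 : 1 / 2 ≤ P.real (Y 0 ⁻¹' {0} ∩ Y 1 ⁻¹' {0})) {i : ℕ} (hi : i + 1 ≤ N) :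
    P.real (Y 0 ⁻¹' {(i : ℝ)} ∩ Y 1 ⁻¹' {((i + 1 : ℕ) : ℝ)}) ≤
        2 * ε * P.real (Y 0 ⁻¹' {(i : ℝ)}) ∧
      P.real (Y 0 ⁻¹' {((i + 1 : ℕ) : ℝ)} ∩ Y 1 ⁻¹' {(i : ℝ)}) ≤
        2 * ε * P.real (Y 1 ⁻¹' {(i : ℝ)}) := by
  obtain ⟨hup, hup'⟩ := h.cell_succ_le hε0 hε1 hi
  cases i with
  | zero =>
    have hp : P.real (Y 0 ⁻¹' {0} ∩ Y 1 ⁻¹' {0}) ≤ P.real (Y 0 ⁻¹' {0}) :=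
      measureReal_mono inter_subset_left
    have hq : P.real (Y 0 ⁻¹' {0} ∩ Y 1 ⁻¹' {0}) ≤ P.real (Y 1 ⁻¹' {0}) :=
      measureReal_mono inter_subset_right
    simp only [Nat.cast_zero, mul_zero, zero_add, pow_one] at hup hup' ⊢
    constructor <;> nlinarith
  | succ k =>
    -- row `k + 1` contains the cell `(k + 1, k)`, column `k + 1` the cell `(k, k + 1)`
    obtain ⟨hk, hk'⟩ := h.cell_succ_eq (i := k) (by omega)
    have hp := measureReal_mono (μ := P)
      (inter_subset_left (s := Y 0 ⁻¹' {((k + 1 : ℕ) : ℝ)}) (t := Y 1 ⁻¹' {(k : ℝ)}))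
    have hq := measureReal_mono (μ := P)
      (inter_subset_right (s := Y 0 ⁻¹' {(k : ℝ)}) (t := Y 1 ⁻¹' {((k + 1 : ℕ) : ℝ)}))
    rw [show ε ^ (2 * (k + 1) + 1) = ε * ε ^ (2 * k + 2) by ring] at hup hup'
    have hp' := mul_le_mul_of_nonneg_left (hk' ▸ hp) hε0
    have hq' := mul_le_mul_of_nonneg_left (hk ▸ hq) hε0
    have hp0 := mul_nonneg hε0 (measureReal_nonneg (μ := P) (s := Y 0 ⁻¹' {((k + 1 : ℕ) : ℝ)}))
    have hq0 := mul_nonneg hε0 (measureReal_nonneg (μ := P) (s := Y 1 ⁻¹' {((k + 1 : ℕ) : ℝ)}))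
    constructor <;> linarith

lemma cell_sq_le (h : ConditionS P N ε Y) [IsFiniteMeasure P] (hε0 : 0 ≤ ε) (hε1 : ε ≤ 1)
    (h00 : 1 / 2 ≤ P.real (Y 0 ⁻¹' {0} ∩ Y 1 ⁻¹' {0})) {i j : ℕ} (hi : i ≤ N) (hj : j ≤ N)
    (hij : i ≠ 0 ∨ j ≠ 0) :
    P.real (Y 0 ⁻¹' {(i : ℝ)} ∩ Y 1 ⁻¹' {(j : ℝ)}) ^ 2 ≤
      2 * ε * (P.real (Y 0 ⁻¹' {(i : ℝ)}) * P.real (Y 1 ⁻¹' {(j : ℝ)})) := by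
  have hp := measureReal_mono (μ := P)
    (inter_subset_left (s := Y 0 ⁻¹' {(i : ℝ)}) (t := Y 1 ⁻¹' {(j : ℝ)}))
  have hq := measureReal_mono (μ := P)
    (inter_subset_right (s := Y 0 ⁻¹' {(i : ℝ)}) (t := Y 1 ⁻¹' {(j : ℝ)}))
  have hr : 0 ≤ P.real (Y 0 ⁻¹' {(i : ℝ)} ∩ Y 1 ⁻¹' {(j : ℝ)}) := measureReal_nonneg
  by_cases hsucc : j = i + 1
  · subst hsucc
    have := (h.cell_succ_le_two_mul hε0 hε1 h00 hj).1
    nlinarith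
  by_cases hpred : i = j + 1
  · subst hpred
    have := (h.cell_succ_le_two_mul hε0 hε1 h00 hi).2
    nlinarith
  have hzero : P (Y 0 ⁻¹' {(i : ℝ)} ∩ Y 1 ⁻¹' {(j : ℝ)}) = 0 := by
    refine h.2.2.2.2.2.2.2 i j hi hj ?_
    rcases eq_or_ne i j with rfl | hne
    · left; omega
    · right; rw [le_abs]; omega
  rw [Measure.real, hzero, ENNReal.toReal_zero]
  have := mul_nonneg (measureReal_nonneg (μ := P) (s := Y 0 ⁻¹' {(i : ℝ)}))
    (measureReal_nonneg (μ := P) (s := Y 1 ⁻¹' {(j : ℝ)}))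
  nlinarith

lemma measureReal_preimage_le_one_sub [IsProbabilityMeasure P]
    (h : ConditionS P N ε Y) {k : ℤ} (hk : k = 0 ∨ k = 1) {x : ℝ} (hx : x ≠ 0) :
    P.real (Y k ⁻¹' {x}) ≤ 1 - P.real (Y 0 ⁻¹' {0} ∩ Y 1 ⁻¹' {0}) := by
  rw [← probReal_compl_eq_one_sub <|
    (h.measurable 0 (measurableSet_singleton 0)).inter (h.measurable 1 (measurableSet_singleton 0))]
  refine measureReal_mono fun ω hω h0 => hx ?_
  rcases hk with rfl | rfl
  · exact (hω : Y 0 ω = x).symm.trans h0.1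
  · exact (hω : Y 1 ω = x).symm.trans h0.2

lemma abs_cell_sub_le [IsProbabilityMeasure P] (h : ConditionS P N ε Y) (hN : 1 ≤ N)
    (hε0 : 0 ≤ ε) (hεN : 4 * N * ε ≤ 1) {i j : ℕ} (hi : i ≤ N) (hj : j ≤ N) :
    |P.real (Y 0 ⁻¹' {(i : ℝ)} ∩ Y 1 ⁻¹' {(j : ℝ)}) -
        P.real (Y 0 ⁻¹' {(i : ℝ)}) * P.real (Y 1 ⁻¹' {(j : ℝ)})| ≤
      2 * √((N + 1) * ε) * √(P.real (Y 0 ⁻¹' {(i : ℝ)}) * P.real (Y 1 ⁻¹' {(j : ℝ)})) := by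
  have hN' : (1 : ℝ) ≤ N := by exact_mod_cast hN
  have hε1 : ε ≤ 1 := by nlinarith
  have hη := h.one_sub_cell_zero_zero_le hN hε0 hε1
  have h00 : 1 / 2 ≤ P.real (Y 0 ⁻¹' {0} ∩ Y 1 ⁻¹' {0}) := by linarith
  have hδ : 2 * N * ε ≤ √((N + 1) * ε) := Real.le_sqrt_of_sq_le <| by
    nlinarith [mul_le_mul_of_nonneg_right hεN (mul_nonneg (Nat.cast_nonneg N) hε0)]
  have hδsq : (2 * √((N + 1) * ε)) ^ 2 = 4 * (N + 1) * ε := by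
    rw [mul_pow, Real.sq_sqrt (by positivity)]; ring
  by_cases hij : i = 0 ∧ j = 0
  · obtain ⟨rfl, rfl⟩ := hij
    push_cast
    calc _ ≤ 2 * (1 - P.real (Y 0 ⁻¹' {0} ∩ Y 1 ⁻¹' {0})) *
            √(P.real (Y 0 ⁻¹' {0}) * P.real (Y 1 ⁻¹' {0})) :=
          abs_sub_mul_le_of_half_le (measureReal_mono inter_subset_left)
            (measureReal_mono inter_subset_right) measureReal_le_one measureReal_le_one h00
      _ ≤ _ := by gcongr; linarith
  · have hp := measureReal_le_one (μ := P) (s := Y 0 ⁻¹' {(i : ℝ)})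
    have hq := measureReal_le_one (μ := P) (s := Y 1 ⁻¹' {(j : ℝ)})
    have hp0 := measureReal_nonneg (μ := P) (s := Y 0 ⁻¹' {(i : ℝ)})
    have hq0 := measureReal_nonneg (μ := P) (s := Y 1 ⁻¹' {(j : ℝ)})
    have hsmall : P.real (Y 0 ⁻¹' {(i : ℝ)}) * P.real (Y 1 ⁻¹' {(j : ℝ)}) ≤ 2 * N * ε := by
      rcases not_and_or.1 hij with hi0 | hj0
      · have := h.measureReal_preimage_le_one_sub (Or.inl rfl) (Nat.cast_ne_zero.2 hi0)
        nlinarith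
      · have := h.measureReal_preimage_le_one_sub (Or.inr rfl) (Nat.cast_ne_zero.2 hj0)
        nlinarith
    refine abs_sub_le_mul_sqrt_of_sq_le measureReal_nonneg (by positivity) (by positivity) ?_ ?_
    · rw [hδsq]
      refine (h.cell_sq_le hε0 hε1 h00 hi hj (not_and_or.1 hij)).trans ?_
      gcongr
      nlinarith
    · rw [hδsq]; nlinarith

lemma maxCorr_zero_one_le [IsProbabilityMeasure P] (h : ConditionS P N ε Y) (hN : 1 ≤ N)
    (hε0 : 0 ≤ ε) (hεN : 4 * N * ε ≤ 1) :
    maxCorr (sigmaOf Y {0}) (sigmaOf Y {1}) P ≤ 2 * √((N + 1) * ε) * (N + 1) * (N + 1) := by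
  refine maxCorr_le (by positivity) fun f g hf hg _ _ => ?_
  rw [sigmaOf_singleton] at hf hg
  have hcell : ∀ x ∈ stateSpace N, ∀ y ∈ stateSpace N,
      |P.real (Y 0 ⁻¹' {x} ∩ Y 1 ⁻¹' {y}) - P.real (Y 0 ⁻¹' {x}) * P.real (Y 1 ⁻¹' {y})| ≤
        2 * √((N + 1) * ε) * √(P.real (Y 0 ⁻¹' {x}) * P.real (Y 1 ⁻¹' {y})) := by
    simp only [stateSpace, Finset.forall_mem_image, Finset.mem_range, Nat.lt_succ_iff]
    exact fun i hi j hj => h.abs_cell_sub_le hN hε0 hεN hi hj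
  have := abs_corrP_le_of_abs_cell_sub_le (h.measurable 0) (h.measurable 1)
    (h.ae_mem_stateSpace 0) (h.ae_mem_stateSpace 1) (by positivity) hcell hf hg
  simpa [card_stateSpace] using this

end ConditionS

/-- Lemma 2.2, Property (4): `ρ(σ(Y^{(ε)}_0), σ(Y^{(ε)}_1)) → 0` as `ε → 0+`. -/
theorem conditionS_rho_one_tendsto_zero [MeasurableSpace Ω] (P : Measure Ω)
    [IsProbabilityMeasure P] (N : ℕ) (hN : 3 ≤ N) (Y : ℝ → ℤ → Ω → ℝ)
    (hY : ∀ ε ∈ Set.Ioc (0:ℝ) (1/3), ConditionS P N ε (Y ε)) :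
    Tendsto (fun ε : ℝ => maxCorr (sigmaOf (Y ε) {0}) (sigmaOf (Y ε) {1}) P)
      (𝓝[>] 0) (𝓝 0) := by
  have hN' : (1 : ℝ) ≤ N := by exact_mod_cast (by omega : 1 ≤ N)
  have hbound : Tendsto (fun ε : ℝ => 2 * √((N + 1) * ε) * (N + 1) * (N + 1)) (𝓝[>] 0) (𝓝 0) := by
    have hcont : Continuous fun ε : ℝ => 2 * √((N + 1) * ε) * (N + 1) * (N + 1) := by fun_prop
    simpa using (hcont.tendsto 0).mono_left nhdsWithin_le_nhds
  refine tendsto_of_tendsto_of_tendsto_of_le_of_le' tendsto_const_nhds hbound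
    (Eventually.of_forall fun ε => maxCorr_nonneg _ _ _) ?_
  filter_upwards [Ioc_mem_nhdsGT (by positivity : (0 : ℝ) < 1 / (4 * N))] with ε ⟨hε0, hεN⟩
  rw [le_div_iff₀ (by positivity), mul_comm] at hεN
  exact (hY ε ⟨hε0, by nlinarith⟩).maxCorr_zero_one_le (by omega) hε0.le hεN

end
end

section
/- Let N ≥ 3 be a fixed integer and m an integer with 1 ≤ m < N/2. For each ε ∈ (0,1/3] let Y^{(ε)} = (Y^{(ε)}_k, k ∈ ℤ) be a strictly stationary Markov chain satisfying Condition S(N,ε). Then P(Y^{(ε)}_{-m} = Y^{(ε)}_m = N−m) ~ ε^{2N−1} as ε → 0+. -/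
open MeasureTheory ProbabilityTheory Filter Set
open scoped ENNReal Topology

noncomputable section

variable {Ω : Type*}

/-!
Write `i = N - m`. The Markov property at time `0`, stationarity and the symmetry of the one-step
law give `P(Y_{-m} = i, Y_m = i) = ∑_l P(Y_0 = i, Y_m = l)² / P(Y_0 = l)`. Under Condition S the
chain is a nearest-neighbour walk with `P(Y_0 = l) ≍ ε^{2l}` for `l ≥ 1`, so an up-step from `l`
has probability `≍ ε²` (only `≍ ε` for the step into `N`) and a down-step at most `1`.
The only path from `i` to `N` in `m` steps goes straight up, whence `P(Y_0 = i, Y_m = N) ~ ε^{2N-1}`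
and the term `l = N` is `~ ε^{2N-1}`; reaching `l < N` needs `(m + l - i)/2` up-steps, so
`P(Y_0 = i, Y_m = l) = O(ε^{N+l})` and these terms are `O(ε^{2N})`.
-/

lemma exists_eq_const_on_fiber {g f : Ω → ℝ}
    (hf : StronglyMeasurable[MeasurableSpace.comap g inferInstance] f) (x : ℝ) :
    ∃ c, ∀ ω ∈ g ⁻¹' {x}, f ω = c := by
  obtain ⟨h, -, rfl⟩ := hf.exists_eq_measurable_comp
  exact ⟨h x, fun ω hω => congrArg h hω⟩

lemma exists_condExp_indicator_eq_on_fiber [MeasurableSpace Ω] {P : Measure Ω} [IsFiniteMeasure P]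
    {g : Ω → ℝ} (hg : Measurable g) (x : ℝ) {A : Set Ω} (hA : MeasurableSet A) :
    ∃ c, (∀ ω ∈ g ⁻¹' {x},
      (P[A.indicator (fun _ => (1:ℝ)) | MeasurableSpace.comap g inferInstance]) ω = c) ∧
      c * P.real (g ⁻¹' {x}) = P.real (A ∩ g ⁻¹' {x}) := by
  obtain ⟨c, hc⟩ := exists_eq_const_on_fiber stronglyMeasurable_condExp x
  refine ⟨c, hc, ?_⟩
  have hT : MeasurableSet[MeasurableSpace.comap g inferInstance] (g ⁻¹' {x}) :=
    ⟨{x}, measurableSet_singleton x, rfl⟩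
  calc c * P.real (g ⁻¹' {x})
      = ∫ ω in g ⁻¹' {x},
          (P[A.indicator (fun _ => (1:ℝ)) | MeasurableSpace.comap g inferInstance]) ω ∂P := by
        rw [setIntegral_congr_fun (hg (measurableSet_singleton x)) hc, setIntegral_const,
          smul_eq_mul, mul_comm]
    _ = P.real (A ∩ g ⁻¹' {x}) := by
        rw [setIntegral_condExp hg.comap_le ((integrable_const 1).indicator hA) hT,
          setIntegral_indicator hA, setIntegral_const, smul_eq_mul, mul_one, Set.inter_comm]

lemma measurableSet_sigmaOf_preimage [MeasurableSpace Ω] (X : ℤ → Ω → ℝ) {S : Set ℤ} {k : ℤ}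
    (hk : k ∈ S) {s : Set ℝ} (hs : MeasurableSet s) : MeasurableSet[sigmaOf X S] (X k ⁻¹' s) :=
  le_iSup₂ (f := fun k _ => MeasurableSpace.comap (X k) inferInstance) k hk _ ⟨s, hs, rfl⟩

lemma sigmaOf_le [MeasurableSpace Ω] {X : ℤ → Ω → ℝ} (hX : ∀ k, Measurable (X k)) (S : Set ℤ) :
    sigmaOf X S ≤ ‹MeasurableSpace Ω› :=
  iSup₂_le fun k _ => (hX k).comap_le

lemma IsMarkovChain.measureReal_inter_mul [MeasurableSpace Ω] {P : Measure Ω} [IsFiniteMeasure P]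
    {X : ℤ → Ω → ℝ} (hM : IsMarkovChain P X) (k : ℤ) (x : ℝ) {A B : Set Ω}
    (hA : MeasurableSet[sigmaOf X (Iic k)] A) (hB : MeasurableSet[sigmaOf X (Ici k)] B) :
    P.real (A ∩ B ∩ X k ⁻¹' {x}) * P.real (X k ⁻¹' {x})
      = P.real (A ∩ X k ⁻¹' {x}) * P.real (B ∩ X k ⁻¹' {x}) := by
  obtain ⟨hX, hmarkov⟩ := hM
  set T := X k ⁻¹' {x}
  have hA' := hA.inter (measurableSet_sigmaOf_preimage X self_mem_Iic (measurableSet_singleton x))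
  have hB' := hB.inter (measurableSet_sigmaOf_preimage X self_mem_Ici (measurableSet_singleton x))
  have hAm := sigmaOf_le hX _ _ hA'
  have hBm := sigmaOf_le hX _ _ hB'
  obtain ⟨a, ha, haT⟩ := exists_condExp_indicator_eq_on_fiber (P := P) (hX k) x hAm
  obtain ⟨b, hb, hbT⟩ := exists_condExp_indicator_eq_on_fiber (P := P) (hX k) x hBm
  obtain ⟨c, hc, hcT⟩ := exists_condExp_indicator_eq_on_fiber (P := P) (hX k) x (hAm.inter hBm)
  have hab : a * b * P.real T = c * P.real T := by
    have h := hmarkov k _ _ hA' hB'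
    rw [sigmaOf_singleton] at h
    have hTm : MeasurableSet T := hX k (measurableSet_singleton x)
    calc a * b * P.real T = ∫ ω in T, a * b ∂P := by rw [setIntegral_const, smul_eq_mul, mul_comm]
      _ = ∫ ω in T, c ∂P := setIntegral_congr_ae hTm (h.mono fun ω hω hωT => by
            rw [← ha ω hωT, ← hb ω hωT, ← hc ω hωT]; exact hω)
      _ = c * P.real T := by rw [setIntegral_const, smul_eq_mul, mul_comm]
  have e1 : A ∩ T ∩ T = A ∩ T := by rw [inter_assoc, inter_self]
  have e2 : B ∩ T ∩ T = B ∩ T := by rw [inter_assoc, inter_self]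
  have e3 : A ∩ T ∩ (B ∩ T) ∩ T = A ∩ B ∩ T := by ext; simp only [mem_inter_iff]; tauto
  rw [e1] at haT
  rw [e2] at hbT
  rw [e3] at hcT
  rw [← haT, ← hbT, ← hcT]
  linear_combination -P.real T * hab

lemma IsMarkovChain.measureReal_inter_eq_div [MeasurableSpace Ω] {P : Measure Ω}
    [IsFiniteMeasure P] {X : ℤ → Ω → ℝ} (hM : IsMarkovChain P X) (k : ℤ) (x : ℝ) {A B : Set Ω}
    (hA : MeasurableSet[sigmaOf X (Iic k)] A) (hB : MeasurableSet[sigmaOf X (Ici k)] B) :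
    P.real (A ∩ B ∩ X k ⁻¹' {x})
      = P.real (A ∩ X k ⁻¹' {x}) * P.real (B ∩ X k ⁻¹' {x}) / P.real (X k ⁻¹' {x}) := by
  -- with `x / 0 = 0` this also holds on null fibers, so no positivity is ever needed downstream
  rcases eq_or_ne (P.real (X k ⁻¹' {x})) 0 with h0 | h0
  · rw [h0, div_zero]
    exact measureReal_mono_null inter_subset_right h0
  · rw [eq_div_iff h0, hM.measureReal_inter_mul k x hA hB]

section Stationary

variable [MeasurableSpace Ω] {P : Measure Ω} {X : ℤ → Ω → ℝ}

lemma StrictlyStationary.measure_preimage_shift (hS : StrictlyStationary P X)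
    (hX : ∀ k, Measurable (X k)) (n : ℤ) {C : Set (ℤ → ℝ)} (hC : MeasurableSet C) :
    P ((fun ω k => X (k + n) ω) ⁻¹' C) = P ((fun ω k => X k ω) ⁻¹' C) := by
  rw [← Measure.map_apply (measurable_pi_lambda _ fun k => hX _) hC,
    ← Measure.map_apply (measurable_pi_lambda _ fun k => hX _) hC, hS n]

lemma StrictlyStationary.measureReal_inter_shift (hS : StrictlyStationary P X)
    (hX : ∀ k, Measurable (X k)) (k l n : ℤ) (a b : ℝ) :
    P.real (X (k + n) ⁻¹' {a} ∩ X (l + n) ⁻¹' {b}) = P.real (X k ⁻¹' {a} ∩ X l ⁻¹' {b}) :=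
  congrArg ENNReal.toReal <| hS.measure_preimage_shift hX n
    (C := (fun f => f k) ⁻¹' {a} ∩ (fun f => f l) ⁻¹' {b})
    ((measurable_pi_apply k (measurableSet_singleton a)).inter
      (measurable_pi_apply l (measurableSet_singleton b)))

lemma StrictlyStationary.ae_mem (hS : StrictlyStationary P X) (hX : ∀ k, Measurable (X k))
    {S : Set ℝ} (hSm : MeasurableSet S) (h0 : ∀ᵐ ω ∂P, X 0 ω ∈ S) (k : ℤ) :
    ∀ᵐ ω ∂P, X k ω ∈ S := by
  have h := hS.measure_preimage_shift hX k (C := {f | f 0 ∉ S}) (measurable_pi_apply 0 hSm).compl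
  have e : (fun ω j => X (j + k) ω) ⁻¹' {f | f 0 ∉ S} = {ω | X k ω ∉ S} := by
    ext; simp
  rw [ae_iff] at h0 ⊢
  rw [← e, h]
  exact h0

lemma StrictlyStationary.ae_exists_eq_nat (hS : StrictlyStationary P X)
    (hX : ∀ k, Measurable (X k)) {N : ℕ} (hstates : ∀ᵐ ω ∂P, ∃ i : ℕ, i ≤ N ∧ X 0 ω = i) (k : ℤ) :
    ∀ᵐ ω ∂P, ∃ i : ℕ, i ≤ N ∧ X k ω = i := by
  have hSm : MeasurableSet {x : ℝ | ∃ i : ℕ, i ≤ N ∧ x = i} := by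
    refine ((countable_range ((↑) : ℕ → ℝ)).mono ?_).measurableSet
    rintro _ ⟨i, -, rfl⟩
    exact ⟨i, rfl⟩
  exact hS.ae_mem hX hSm hstates k

lemma measureReal_eq_sum_inter_preimage [IsFiniteMeasure P] {Z : Ω → ℝ} (hZ : Measurable Z)
    {N : ℕ} (hZN : ∀ᵐ ω ∂P, ∃ i : ℕ, i ≤ N ∧ Z ω = i) {A : Set Ω} (hA : MeasurableSet A) :
    P.real A = ∑ i ∈ Finset.range (N + 1), P.real (A ∩ Z ⁻¹' {(i : ℝ)}) := by
  rw [← measureReal_biUnion_finset ?_ fun i _ => hA.inter (hZ (measurableSet_singleton _))]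
  · refine measureReal_congr (hZN.mono fun ω ⟨i, hi, hω⟩ => ?_)
    change (ω ∈ A) = (ω ∈ ⋃ i ∈ Finset.range (N + 1), A ∩ Z ⁻¹' {(i : ℝ)})
    simp [hω, hi]
  · intro i _ j _ hij
    exact disjoint_left.mpr fun ω h1 h2 => hij (Nat.cast_injective (h1.2.symm.trans h2.2))

end Stationary

def stateProb [MeasurableSpace Ω] (P : Measure Ω) (X : ℤ → Ω → ℝ) (i : ℕ) : ℝ :=
  P.real (X 0 ⁻¹' {(i : ℝ)})

def jointProb [MeasurableSpace Ω] (P : Measure Ω) (X : ℤ → Ω → ℝ) (s i j : ℕ) : ℝ :=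
  P.real (X 0 ⁻¹' {(i : ℝ)} ∩ X s ⁻¹' {(j : ℝ)})

section Chain

variable [MeasurableSpace Ω] {P : Measure Ω} {X : ℤ → Ω → ℝ} {N : ℕ}

lemma jointProb_one_def (l j : ℕ) :
    jointProb P X 1 l j = (P {ω | X 0 ω = l ∧ X 1 ω = j}).toReal :=
  rfl

lemma jointProb_zero_of_ne {i j : ℕ} (hij : i ≠ j) : jointProb P X 0 i j = 0 := by
  have : X 0 ⁻¹' {(i : ℝ)} ∩ X 0 ⁻¹' {(j : ℝ)} = ∅ :=
    eq_empty_of_forall_notMem fun ω h => hij (Nat.cast_injective (h.1.symm.trans h.2))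
  simp [jointProb, this]

lemma jointProb_zero_self (i : ℕ) : jointProb P X 0 i i = stateProb P X i := by
  simp [jointProb, stateProb]

lemma StrictlyStationary.measureReal_preimage_eq_stateProb (hS : StrictlyStationary P X)
    (hX : ∀ k, Measurable (X k)) (k : ℤ) (i : ℕ) :
    P.real (X k ⁻¹' {(i : ℝ)}) = stateProb P X i := by
  simpa [stateProb] using hS.measureReal_inter_shift hX 0 0 k i i

lemma StrictlyStationary.measureReal_inter_eq_jointProb (hS : StrictlyStationary P X)
    (hX : ∀ k, Measurable (X k)) (a : ℤ) (s i j : ℕ) :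
    P.real (X a ⁻¹' {(i : ℝ)} ∩ X (a + s) ⁻¹' {(j : ℝ)}) = jointProb P X s i j := by
  simpa [jointProb, add_comm] using hS.measureReal_inter_shift hX 0 s a i j

variable [IsFiniteMeasure P]

lemma jointProb_le_stateProb (s i j : ℕ) : jointProb P X s i j ≤ stateProb P X i :=
  measureReal_mono inter_subset_left

lemma IsMarkovChain.measureReal_inter_eq_sum (hM : IsMarkovChain P X) {a t b : ℤ}
    (hat : a ≤ t) (htb : t ≤ b) (ht : ∀ᵐ ω ∂P, ∃ i : ℕ, i ≤ N ∧ X t ω = i) (x y : ℝ) :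
    P.real (X a ⁻¹' {x} ∩ X b ⁻¹' {y}) = ∑ l ∈ Finset.range (N + 1),
      P.real (X a ⁻¹' {x} ∩ X t ⁻¹' {(l : ℝ)}) * P.real (X b ⁻¹' {y} ∩ X t ⁻¹' {(l : ℝ)})
        / P.real (X t ⁻¹' {(l : ℝ)}) := by
  have hX := hM.1
  rw [measureReal_eq_sum_inter_preimage (hX t) ht
    ((hX a (measurableSet_singleton x)).inter (hX b (measurableSet_singleton y)))]
  exact Finset.sum_congr rfl fun l _ => hM.measureReal_inter_eq_div t l
    (measurableSet_sigmaOf_preimage X (mem_Iic.mpr hat) (measurableSet_singleton x))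
    (measurableSet_sigmaOf_preimage X (mem_Ici.mpr htb) (measurableSet_singleton y))

lemma stateProb_eq_sum_jointProb (hS : StrictlyStationary P X) (hX : ∀ k, Measurable (X k))
    (hstates : ∀ᵐ ω ∂P, ∃ i : ℕ, i ≤ N ∧ X 0 ω = i) (s i : ℕ) :
    stateProb P X i = ∑ j ∈ Finset.range (N + 1), jointProb P X s i j :=
  measureReal_eq_sum_inter_preimage (hX s) (hS.ae_exists_eq_nat hX hstates s)
    (hX 0 (measurableSet_singleton _))

lemma jointProb_succ (hS : StrictlyStationary P X) (hM : IsMarkovChain P X)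
    (hstates : ∀ᵐ ω ∂P, ∃ i : ℕ, i ≤ N ∧ X 0 ω = i) (s i j : ℕ) :
    jointProb P X (s + 1) i j = ∑ l ∈ Finset.range (N + 1),
      jointProb P X s i l * jointProb P X 1 l j / stateProb P X l := by
  have hX := hM.1
  rw [jointProb, hM.measureReal_inter_eq_sum (t := s) (by positivity) (by push_cast; omega)
    (hS.ae_exists_eq_nat hX hstates s)]
  refine Finset.sum_congr rfl fun l _ => ?_
  rw [inter_comm (X _ ⁻¹' {(j : ℝ)}), ← hS.measureReal_inter_eq_jointProb hX s 1 l j,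
    hS.measureReal_preimage_eq_stateProb hX]
  push_cast
  rfl

lemma jointProb_succ' (hS : StrictlyStationary P X) (hM : IsMarkovChain P X)
    (hstates : ∀ᵐ ω ∂P, ∃ i : ℕ, i ≤ N ∧ X 0 ω = i) (s i j : ℕ) :
    jointProb P X (s + 1) i j = ∑ l ∈ Finset.range (N + 1),
      jointProb P X 1 i l * jointProb P X s l j / stateProb P X l := by
  have hX := hM.1
  rw [jointProb, hM.measureReal_inter_eq_sum (t := 1) (by positivity) (by push_cast; omega)
    (hS.ae_exists_eq_nat hX hstates 1)]
  refine Finset.sum_congr rfl fun l _ => ?_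
  rw [inter_comm (X _ ⁻¹' {(j : ℝ)}), ← hS.measureReal_inter_eq_jointProb hX 1 s l j,
    hS.measureReal_preimage_eq_stateProb hX]
  push_cast
  rw [add_comm]
  rfl

lemma jointProb_comm (hS : StrictlyStationary P X) (hM : IsMarkovChain P X)
    (hstates : ∀ᵐ ω ∂P, ∃ i : ℕ, i ≤ N ∧ X 0 ω = i)
    (hsymm : ∀ i j, i ≤ N → j ≤ N → jointProb P X 1 i j = jointProb P X 1 j i) :
    ∀ s i j, i ≤ N → j ≤ N → jointProb P X s i j = jointProb P X s j i
  | 0, i, j, _, _ => by rw [jointProb, jointProb, inter_comm]; rfl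
  | s + 1, i, j, hi, hj => by
    rw [jointProb_succ hS hM hstates, jointProb_succ' hS hM hstates]
    refine Finset.sum_congr rfl fun l hl => ?_
    have hl : l ≤ N := Nat.lt_succ_iff.mp (Finset.mem_range.mp hl)
    rw [jointProb_comm hS hM hstates hsymm s i l hi hl, hsymm l j hl hj, mul_comm]

lemma jointProb_eq_zero_of_add_lt (hS : StrictlyStationary P X) (hM : IsMarkovChain P X)
    (hstates : ∀ᵐ ω ∂P, ∃ i : ℕ, i ≤ N ∧ X 0 ω = i)
    (hnear : ∀ l j, l ≤ N → j ≤ N → l + 2 ≤ j ∨ j + 2 ≤ l → jointProb P X 1 l j = 0) :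
    ∀ s i j, j ≤ N → i + s < j ∨ j + s < i → jointProb P X s i j = 0
  | 0, _, _, _, h => jointProb_zero_of_ne (by omega)
  | s + 1, i, j, hj, h => by
    rw [jointProb_succ hS hM hstates]
    refine Finset.sum_eq_zero fun l hl => ?_
    have hl : l ≤ N := Nat.lt_succ_iff.mp (Finset.mem_range.mp hl)
    by_cases hfar : i + s < l ∨ l + s < i
    · rw [jointProb_eq_zero_of_add_lt hS hM hstates hnear s i l hl hfar, zero_mul, zero_div]
    · rw [hnear l j hl hj (by omega), mul_zero, zero_div]

lemma measureReal_inter_neg_eq_sum (hS : StrictlyStationary P X) (hM : IsMarkovChain P X)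
    (hstates : ∀ᵐ ω ∂P, ∃ i : ℕ, i ≤ N ∧ X 0 ω = i)
    (hsymm : ∀ i j, i ≤ N → j ≤ N → jointProb P X 1 i j = jointProb P X 1 j i)
    (m : ℕ) {i : ℕ} (hi : i ≤ N) :
    P.real (X (-m) ⁻¹' {(i : ℝ)} ∩ X m ⁻¹' {(i : ℝ)})
      = ∑ l ∈ Finset.range (N + 1), jointProb P X m i l ^ 2 / stateProb P X l := by
  have hX := hM.1
  rw [hM.measureReal_inter_eq_sum (t := 0) (by omega) (by omega) hstates]
  refine Finset.sum_congr rfl fun l hl => ?_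
  have hl : l ≤ N := Nat.lt_succ_iff.mp (Finset.mem_range.mp hl)
  have hpast := hS.measureReal_inter_eq_jointProb hX (-m) m i l
  have hfuture := hS.measureReal_inter_eq_jointProb hX 0 m l i
  rw [neg_add_cancel] at hpast
  rw [zero_add] at hfuture
  rw [hpast, inter_comm, hfuture, jointProb_comm hS hM hstates hsymm m l i hl hi, sq]
  rfl

end Chain

/-- Under Condition S, `edgeWeight N ε l = P(Y_0 = l - 1, Y_1 = l) = P(Y_0 = l, Y_1 = l - 1)`
for `1 ≤ l ≤ N`. -/
def edgeWeight (N : ℕ) (ε : ℝ) (l : ℕ) : ℝ := if l = N then ε ^ (2 * N - 1) else ε ^ (2 * l)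

section EdgeWeight

variable {N : ℕ} {ε : ℝ}

lemma edgeWeight_of_ne {l : ℕ} (h : l ≠ N) : edgeWeight N ε l = ε ^ (2 * l) := if_neg h

lemma edgeWeight_self : edgeWeight N ε N = ε ^ (2 * N - 1) := if_pos rfl

lemma edgeWeight_pos (hε : 0 < ε) (l : ℕ) : 0 < edgeWeight N ε l := by
  unfold edgeWeight
  split <;> positivity

lemma edgeWeight_succ_le (hε0 : 0 ≤ ε) (hε1 : ε ≤ 1) {l : ℕ} (hl : l < N) :
    edgeWeight N ε (l + 1) ≤ ε * edgeWeight N ε l := by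
  rw [edgeWeight_of_ne hl.ne]
  rcases eq_or_ne (l + 1) N with rfl | hN
  · rw [edgeWeight_self, show 2 * (l + 1) - 1 = 2 * l + 1 by omega, pow_succ']
  · rw [edgeWeight_of_ne hN, show 2 * (l + 1) = 2 * l + 1 + 1 by ring, pow_succ, pow_succ']
    exact mul_le_of_le_one_right (by positivity) hε1

end EdgeWeight

namespace ConditionS

variable [MeasurableSpace Ω] {P : Measure Ω} {N : ℕ} {ε : ℝ} {Y : ℤ → Ω → ℝ}

lemma jointProb_one_eq_zero (hC : ConditionS P N ε Y) {l j : ℕ} (hl : l ≤ N) (hj : j ≤ N)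
    (hlj : 0 < l + j) (h1 : l + 1 ≠ j) (h2 : j + 1 ≠ l) : jointProb P Y 1 l j = 0 := by
  obtain ⟨-, -, -, -, -, -, -, hzero⟩ := hC
  have h := hzero l j hl hj (by
    by_cases h : l = j
    · exact Or.inl ⟨h, by omega⟩
    · exact Or.inr (le_abs.mpr (by omega)))
  rw [jointProb_one_def, h, ENNReal.toReal_zero]

lemma jointProb_one_succ (hC : ConditionS P N ε Y) {l : ℕ} (hl : l < N) :
    jointProb P Y 1 l (l + 1) = edgeWeight N ε (l + 1)
      ∧ jointProb P Y 1 (l + 1) l = edgeWeight N ε (l + 1) := by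
  obtain ⟨-, -, -, -, hmid, hup, hdown, -⟩ := hC
  have hcast : ((l : ℕ) : ℝ) = ((l + 1 : ℕ) : ℝ) - 1 := by push_cast; ring
  rcases eq_or_ne (l + 1) N with rfl | hN
  · rw [edgeWeight_self, jointProb_one_def, jointProb_one_def, hcast]
    exact ⟨hup, hdown⟩
  · rw [edgeWeight_of_ne hN, jointProb_one_def, jointProb_one_def, hcast]
    exact hmid (l + 1) (by omega) (by omega)

lemma jointProb_one_comm (hC : ConditionS P N ε Y) {i j : ℕ} (hi : i ≤ N) (hj : j ≤ N) :
    jointProb P Y 1 i j = jointProb P Y 1 j i := by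
  rcases Nat.lt_trichotomy i j with h | rfl | h
  · rcases eq_or_ne (i + 1) j with rfl | h'
    · exact (hC.jointProb_one_succ (by omega)).1.trans (hC.jointProb_one_succ (by omega)).2.symm
    · rw [hC.jointProb_one_eq_zero hi hj (by omega) h' (by omega),
        hC.jointProb_one_eq_zero hj hi (by omega) (by omega) h']
  · rfl
  · rcases eq_or_ne (j + 1) i with rfl | h'
    · exact (hC.jointProb_one_succ (by omega)).2.trans (hC.jointProb_one_succ (by omega)).1.symm
    · rw [hC.jointProb_one_eq_zero hi hj (by omega) (by omega) h',
        hC.jointProb_one_eq_zero hj hi (by omega) h' (by omega)]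

variable [IsFiniteMeasure P]

lemma stateProb_eq_add (hC : ConditionS P N ε Y) {l : ℕ} (hl : l + 1 < N) :
    stateProb P Y (l + 1) = edgeWeight N ε (l + 1) + edgeWeight N ε (l + 2) := by
  rw [stateProb_eq_sum_jointProb hC.1 hC.2.1.1 hC.2.2.1 1,
    Finset.sum_eq_add_of_mem l (l + 2) (Finset.mem_range.mpr (by omega))
      (Finset.mem_range.mpr (by omega)) (by omega)]
  · rw [(hC.jointProb_one_succ (by omega)).2, (hC.jointProb_one_succ hl).1]
  · intro k hk hne
    rw [Finset.mem_range] at hk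
    exact hC.jointProb_one_eq_zero (by omega) (by omega) (by omega) (by omega) (by omega)

lemma stateProb_self (hC : ConditionS P N ε Y) (hN : 0 < N) :
    stateProb P Y N = edgeWeight N ε N := by
  rw [stateProb_eq_sum_jointProb hC.1 hC.2.1.1 hC.2.2.1 1,
    Finset.sum_eq_single_of_mem (N - 1) (Finset.mem_range.mpr (by omega))]
  · simpa [Nat.sub_add_cancel hN] using (hC.jointProb_one_succ (l := N - 1) (by omega)).2
  · intro k hk hne
    rw [Finset.mem_range] at hk
    exact hC.jointProb_one_eq_zero le_rfl (by omega) (by omega) (by omega) (by omega)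

lemma edgeWeight_le_stateProb (hC : ConditionS P N ε Y) {l : ℕ} (hl1 : 1 ≤ l) (hlN : l ≤ N) :
    edgeWeight N ε l ≤ stateProb P Y l := by
  obtain ⟨k, rfl⟩ : ∃ k, l = k + 1 := ⟨l - 1, by omega⟩
  rw [← (hC.jointProb_one_succ hlN).2]
  exact jointProb_le_stateProb 1 _ _

lemma stateProb_le (hC : ConditionS P N ε Y) (hε0 : 0 < ε) (hε1 : ε ≤ 1) {l : ℕ} (hl1 : 1 ≤ l)
    (hlN : l ≤ N) : stateProb P Y l ≤ edgeWeight N ε l * (1 + ε) := by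
  obtain ⟨k, rfl⟩ : ∃ k, l = k + 1 := ⟨l - 1, by omega⟩
  rcases eq_or_lt_of_le hlN with rfl | hlt
  · rw [hC.stateProb_self (by omega)]
    nlinarith [edgeWeight_pos (N := k + 1) hε0 (k + 1)]
  · rw [hC.stateProb_eq_add hlt]
    nlinarith [edgeWeight_succ_le (N := N) hε0.le hε1 (l := k + 1) hlt]

lemma jointProb_eq_zero_of_add_lt (hC : ConditionS P N ε Y) {s i j : ℕ} (hj : j ≤ N)
    (h : i + s < j ∨ j + s < i) : jointProb P Y s i j = 0 :=
  _root_.jointProb_eq_zero_of_add_lt hC.1 hC.2.1 hC.2.2.1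
    (fun _ _ hl hj _ => hC.jointProb_one_eq_zero hl hj (by omega) (by omega) (by omega)) s i j hj h

lemma jointProb_succ_add_one (hC : ConditionS P N ε Y) {s i j : ℕ} (hj : j + 1 < N) :
    jointProb P Y (s + 1) i (j + 1)
      = jointProb P Y s i j * edgeWeight N ε (j + 1) / stateProb P Y j
        + jointProb P Y s i (j + 2) * edgeWeight N ε (j + 2) / stateProb P Y (j + 2) := by
  rw [jointProb_succ hC.1 hC.2.1 hC.2.2.1, Finset.sum_eq_add_of_mem j (j + 2)
    (Finset.mem_range.mpr (by omega)) (Finset.mem_range.mpr (by omega)) (by omega)]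
  · rw [(hC.jointProb_one_succ (by omega)).1, (hC.jointProb_one_succ hj).2]
  · intro k hk hne
    rw [Finset.mem_range] at hk
    rw [hC.jointProb_one_eq_zero (by omega) (by omega) (by omega) (by omega) (by omega),
      mul_zero, zero_div]

lemma jointProb_succ_top (hC : ConditionS P N ε Y) (hN : 0 < N) (s i : ℕ) :
    jointProb P Y (s + 1) i N
      = jointProb P Y s i (N - 1) * edgeWeight N ε N / stateProb P Y (N - 1) := by
  rw [jointProb_succ hC.1 hC.2.1 hC.2.2.1,
    Finset.sum_eq_single_of_mem (N - 1) (Finset.mem_range.mpr (by omega))]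
  · have hup := (hC.jointProb_one_succ (l := N - 1) (by omega)).1
    rw [Nat.sub_add_cancel hN] at hup
    rw [hup]
  · intro k hk hne
    rw [Finset.mem_range] at hk
    rw [hC.jointProb_one_eq_zero (by omega) le_rfl (by omega) (by omega) (by omega),
      mul_zero, zero_div]

lemma jointProb_succ_diag (hC : ConditionS P N ε Y) {s i : ℕ} (h : i + s < N) :
    jointProb P Y (s + 1) i (i + s + 1)
      = jointProb P Y s i (i + s) * edgeWeight N ε (i + s + 1) / stateProb P Y (i + s) := by
  rcases (show i + s + 1 < N ∨ i + s + 1 = N by omega) with hlt | heq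
  · rw [hC.jointProb_succ_add_one hlt,
      hC.jointProb_eq_zero_of_add_lt (j := i + s + 2) (by omega) (by omega), zero_mul, zero_div,
      add_zero]
  · rw [heq, hC.jointProb_succ_top (by omega), show N - 1 = i + s by omega]

lemma jointProb_diag_bounds (hC : ConditionS P N ε Y) (hε0 : 0 < ε) (hε1 : ε ≤ 1) {i : ℕ}
    (hi : 1 ≤ i) : ∀ s, i + s ≤ N →
      edgeWeight N ε (i + s) / (1 + ε) ^ s ≤ jointProb P Y s i (i + s)
        ∧ jointProb P Y s i (i + s) ≤ edgeWeight N ε (i + s) * (1 + ε)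
  | 0, h => by
    rw [add_zero, jointProb_zero_self, pow_zero, div_one]
    exact ⟨hC.edgeWeight_le_stateProb hi h, hC.stateProb_le hε0 hε1 hi h⟩
  | s + 1, h => by
    obtain ⟨hlo, hup⟩ := hC.jointProb_diag_bounds hε0 hε1 hi s (by omega)
    have hμlo := hC.edgeWeight_le_stateProb (l := i + s) (by omega) (by omega)
    have hμup := hC.stateProb_le hε0 hε1 (l := i + s) (by omega) (by omega)
    have ha := edgeWeight_pos (N := N) hε0 (i + s)
    have hb := edgeWeight_pos (N := N) hε0 (i + s + 1)
    rw [← add_assoc, hC.jointProb_succ_diag (by omega)]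
    constructor
    · calc edgeWeight N ε (i + s + 1) / (1 + ε) ^ (s + 1)
          = edgeWeight N ε (i + s) / (1 + ε) ^ s * edgeWeight N ε (i + s + 1)
              / (edgeWeight N ε (i + s) * (1 + ε)) := by
            field_simp
            ring
        _ ≤ _ := by
            gcongr
            exacts [mul_nonneg measureReal_nonneg hb.le, ha.trans_le hμlo]
    · calc _ ≤ edgeWeight N ε (i + s) * (1 + ε) * edgeWeight N ε (i + s + 1)
              / edgeWeight N ε (i + s) := by gcongr
        _ = edgeWeight N ε (i + s + 1) * (1 + ε) := by
            field_simp

/-- `P(Y_0 = i) ≤ 2 ε^{2i}`, and a path from `i` to `j` in `s` steps makes `(s + j - i) / 2`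
up-steps, each costing at most `ε²`; `s < i` keeps the path away from `0`, where it may stay put. -/
lemma jointProb_le_two_pow_mul (hC : ConditionS P N ε Y) (hε0 : 0 < ε) (hε1 : ε ≤ 1) {i : ℕ} :
    ∀ s, s < i → i + s ≤ N → ∀ j, j < N → jointProb P Y s i j ≤ 2 ^ (s + 1) * ε ^ (i + s + j)
  | 0, _, _, j, hj => by
    rcases eq_or_ne i j with rfl | hne
    · have hμ := hC.stateProb_le hε0 hε1 (l := i) (by omega) hj.le
      rw [edgeWeight_of_ne hj.ne] at hμ
      rw [jointProb_zero_self, add_zero, ← two_mul, zero_add, pow_one]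
      nlinarith [mul_nonneg (sub_nonneg.2 hε1) (pow_pos hε0 (2 * i)).le]
    · rw [jointProb_zero_of_ne hne]
      positivity
  | s + 1, _, _, 0, _ => by
    rw [hC.jointProb_eq_zero_of_add_lt (by omega) (by omega)]
    positivity
  | s + 1, hs, hsN, j + 1, hj => by
    have ih := hC.jointProb_le_two_pow_mul hε0 hε1 (i := i) s (by omega) (by omega)
    have hleft : jointProb P Y s i j * edgeWeight N ε (j + 1) / stateProb P Y j
        ≤ 2 ^ (s + 1) * ε ^ (i + s + j) * ε ^ 2 := by
      rcases eq_or_ne j 0 with rfl | hj0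
      · rw [hC.jointProb_eq_zero_of_add_lt (by omega) (by omega), zero_mul, zero_div]
        positivity
      have hratio : edgeWeight N ε (j + 1) / stateProb P Y j ≤ ε ^ 2 := by
        refine div_le_of_le_mul₀ measureReal_nonneg (by positivity) ?_
        have hμ := hC.edgeWeight_le_stateProb (l := j) (by omega) (by omega)
        rw [edgeWeight_of_ne (by omega)] at hμ
        rw [edgeWeight_of_ne (by omega)]
        calc ε ^ (2 * (j + 1)) = ε ^ 2 * ε ^ (2 * j) := by ring
          _ ≤ ε ^ 2 * stateProb P Y j := by gcongr
      rw [mul_div_assoc]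
      exact mul_le_mul (ih j (by omega)) hratio
        (div_nonneg (edgeWeight_pos hε0 _).le measureReal_nonneg) (by positivity)
    have hright : jointProb P Y s i (j + 2) * edgeWeight N ε (j + 2) / stateProb P Y (j + 2)
        ≤ 2 ^ (s + 1) * ε ^ (i + s + (j + 2)) := by
      have hT : jointProb P Y s i (j + 2) ≤ 2 ^ (s + 1) * ε ^ (i + s + (j + 2)) := by
        rcases (show j + 2 < N ∨ j + 2 = N by omega) with hlt | heq
        · exact ih (j + 2) hlt
        · rw [hC.jointProb_eq_zero_of_add_lt (by omega) (by omega)]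
          positivity
      have hratio : edgeWeight N ε (j + 2) / stateProb P Y (j + 2) ≤ 1 :=
        div_le_one_of_le₀ (hC.edgeWeight_le_stateProb (by omega) (by omega)) measureReal_nonneg
      rw [mul_div_assoc]
      exact (mul_le_of_le_one_right measureReal_nonneg hratio).trans hT
    rw [hC.jointProb_succ_add_one hj]
    calc _ ≤ 2 ^ (s + 1) * ε ^ (i + s + j) * ε ^ 2 + 2 ^ (s + 1) * ε ^ (i + s + (j + 2)) :=
          add_le_add hleft hright
      _ = 2 ^ (s + 1 + 1) * ε ^ (i + (s + 1) + (j + 1)) := by ring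

lemma measureReal_inter_neg_eq_sum (hC : ConditionS P N ε Y) (m : ℕ) {i : ℕ} (hi : i ≤ N) :
    P.real (Y (-m) ⁻¹' {(i : ℝ)} ∩ Y m ⁻¹' {(i : ℝ)})
      = ∑ l ∈ Finset.range (N + 1), jointProb P Y m i l ^ 2 / stateProb P Y l :=
  _root_.measureReal_inter_neg_eq_sum hC.1 hC.2.1 hC.2.2.1
    (fun _ _ hi hj => hC.jointProb_one_comm hi hj) m hi

lemma jointProb_sq_div_stateProb_le (hC : ConditionS P N ε Y) (hε0 : 0 < ε) (hε1 : ε ≤ 1)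
    {m l : ℕ} (hm : 2 * m < N) (hl : l < N) :
    jointProb P Y m (N - m) l ^ 2 / stateProb P Y l ≤ 4 ^ (m + 1) * ε ^ (2 * N) := by
  rcases eq_or_ne l 0 with rfl | hl0
  · rw [hC.jointProb_eq_zero_of_add_lt (by omega) (by omega), sq, zero_mul, zero_div]
    positivity
  have hT := hC.jointProb_le_two_pow_mul hε0 hε1 (i := N - m) m (by omega) (by omega) l hl
  rw [show N - m + m + l = N + l by omega] at hT
  have hμ := hC.edgeWeight_le_stateProb (l := l) (by omega) hl.le
  rw [edgeWeight_of_ne hl.ne] at hμ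
  calc jointProb P Y m (N - m) l ^ 2 / stateProb P Y l
      ≤ (2 ^ (m + 1) * ε ^ (N + l)) ^ 2 / ε ^ (2 * l) := by
        gcongr
        exact measureReal_nonneg
    _ = 4 ^ (m + 1) * ε ^ (2 * N) := by
        rw [show (4 : ℝ) ^ (m + 1) = (2 ^ (m + 1)) ^ 2 by rw [← pow_mul, pow_mul']; norm_num]
        field_simp
        ring

lemma le_measureReal_inter_neg (hC : ConditionS P N ε Y) (hε0 : 0 < ε) (hε1 : ε ≤ 1) {m : ℕ}
    (hm : 2 * m < N) :
    ε ^ (2 * N - 1) / (1 + ε) ^ (2 * m)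
      ≤ P.real (Y (-m) ⁻¹' {((N - m : ℕ) : ℝ)} ∩ Y m ⁻¹' {((N - m : ℕ) : ℝ)}) := by
  rw [hC.measureReal_inter_neg_eq_sum m (Nat.sub_le N m)]
  obtain ⟨hlo, -⟩ := hC.jointProb_diag_bounds hε0 hε1 (i := N - m) (by omega) m (by omega)
  rw [show N - m + m = N by omega, edgeWeight_self] at hlo
  have hμ := hC.stateProb_self (by omega)
  rw [edgeWeight_self] at hμ
  calc ε ^ (2 * N - 1) / (1 + ε) ^ (2 * m)
      = (ε ^ (2 * N - 1) / (1 + ε) ^ m) ^ 2 / ε ^ (2 * N - 1) := by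
        field_simp
        ring
    _ ≤ jointProb P Y m (N - m) N ^ 2 / stateProb P Y N := by
        rw [hμ]
        gcongr
    _ ≤ ∑ l ∈ Finset.range (N + 1), jointProb P Y m (N - m) l ^ 2 / stateProb P Y l :=
        Finset.single_le_sum (f := fun l => jointProb P Y m (N - m) l ^ 2 / stateProb P Y l)
          (fun _ _ => div_nonneg (sq_nonneg _) measureReal_nonneg) (Finset.self_mem_range_succ N)

lemma measureReal_inter_neg_le (hC : ConditionS P N ε Y) (hε0 : 0 < ε) (hε1 : ε ≤ 1) {m : ℕ}
    (hm : 2 * m < N) :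
    P.real (Y (-m) ⁻¹' {((N - m : ℕ) : ℝ)} ∩ Y m ⁻¹' {((N - m : ℕ) : ℝ)})
      ≤ ε ^ (2 * N - 1) * ((1 + ε) ^ 2 + N * 4 ^ (m + 1) * ε) := by
  rw [hC.measureReal_inter_neg_eq_sum m (Nat.sub_le N m), Finset.sum_range_succ]
  obtain ⟨-, hup⟩ := hC.jointProb_diag_bounds hε0 hε1 (i := N - m) (by omega) m (by omega)
  rw [show N - m + m = N by omega, edgeWeight_self] at hup
  have hμ := hC.stateProb_self (by omega)
  rw [edgeWeight_self] at hμ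
  have htop :
      jointProb P Y m (N - m) N ^ 2 / stateProb P Y N ≤ ε ^ (2 * N - 1) * (1 + ε) ^ 2 := by
    calc jointProb P Y m (N - m) N ^ 2 / stateProb P Y N
        ≤ (ε ^ (2 * N - 1) * (1 + ε)) ^ 2 / ε ^ (2 * N - 1) := by
          rw [hμ]
          gcongr
          exact measureReal_nonneg
      _ = ε ^ (2 * N - 1) * (1 + ε) ^ 2 := by
          field_simp
  have hrest : ∑ l ∈ Finset.range N, jointProb P Y m (N - m) l ^ 2 / stateProb P Y l
      ≤ N * (4 ^ (m + 1) * ε ^ (2 * N)) := by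
    calc _ ≤ ∑ _l ∈ Finset.range N, 4 ^ (m + 1) * ε ^ (2 * N) := Finset.sum_le_sum fun l hl =>
          hC.jointProb_sq_div_stateProb_le hε0 hε1 hm (Finset.mem_range.mp hl)
      _ = N * (4 ^ (m + 1) * ε ^ (2 * N)) := by simp
  have hsplit : ε ^ (2 * N) = ε ^ (2 * N - 1) * ε := by
    rw [← pow_succ, Nat.sub_add_cancel (by omega)]
  rw [hsplit] at hrest
  linear_combination hrest + htop

end ConditionS

theorem conditionS_P_B_general [MeasurableSpace Ω] (P : Measure Ω)
    [IsProbabilityMeasure P] (N : ℕ) (m : ℕ) (hm2 : 2 * m < N)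
    (Y : ℝ → ℤ → Ω → ℝ)
    (hY : ∀ ε ∈ Set.Ioc (0:ℝ) (1/3), ConditionS P N ε (Y ε)) :
    Tendsto (fun ε : ℝ =>
        (P {ω | Y ε (-(m:ℤ)) ω = ((N - m : ℕ):ℝ) ∧ Y ε (m:ℤ) ω = ((N - m : ℕ):ℝ)}).toReal
          / ε^(2*N-1))
      (𝓝[>] 0) (𝓝 1) := by
  have hlower : Tendsto (fun ε : ℝ => ((1 + ε) ^ (2 * m))⁻¹) (𝓝[>] 0) (𝓝 1) := by
    have h : Continuous fun ε : ℝ => (1 + ε) ^ (2 * m) := by fun_prop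
    simpa using ((h.tendsto 0).inv₀ (by simp)).mono_left nhdsWithin_le_nhds
  have hupper : Tendsto (fun ε : ℝ => (1 + ε) ^ 2 + N * 4 ^ (m + 1) * ε) (𝓝[>] 0) (𝓝 1) := by
    have h : Continuous fun ε : ℝ => (1 + ε) ^ 2 + N * 4 ^ (m + 1) * ε := by fun_prop
    simpa using (h.tendsto 0).mono_left nhdsWithin_le_nhds
  have hsmall : ∀ᶠ ε in 𝓝[>] (0 : ℝ), ε ∈ Ioc (0 : ℝ) (1 / 3) := Ioc_mem_nhdsGT (by norm_num)
  refine tendsto_of_tendsto_of_tendsto_of_le_of_le' hlower hupper ?_ ?_ <;>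
    filter_upwards [hsmall] with ε hε
  · rw [le_div_iff₀ (pow_pos hε.1 _), ← div_eq_inv_mul]
    exact (hY ε hε).le_measureReal_inter_neg hε.1 (by linarith [hε.2]) hm2
  · rw [div_le_iff₀ (pow_pos hε.1 _), mul_comm]
    exact (hY ε hε).measureReal_inter_neg_le hε.1 (by linarith [hε.2]) hm2

/-- Eq. (2.21): with `B_ε = {Y^{(ε)}_{-m} = Y^{(ε)}_m = N−m}` for `1 ≤ m < N/2`, one has
`P(B_ε) ~ ε^{2N−1}` as `ε → 0+`. -/
theorem conditionS_P_B [MeasurableSpace Ω] (P : Measure Ω)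
    [IsProbabilityMeasure P] (N : ℕ) (hN : 3 ≤ N) (m : ℕ) (hm1 : 1 ≤ m) (hm2 : 2 * m < N)
    (Y : ℝ → ℤ → Ω → ℝ)
    (hY : ∀ ε ∈ Set.Ioc (0:ℝ) (1/3), ConditionS P N ε (Y ε)) :
    Tendsto (fun ε : ℝ =>
        (P {ω | Y ε (-(m:ℤ)) ω = ((N - m : ℕ):ℝ) ∧ Y ε (m:ℤ) ω = ((N - m : ℕ):ℝ)}).toReal
          / ε^(2*N-1))
      (𝓝[>] 0) (𝓝 1) :=
  conditionS_P_B_general P N m hm2 Y hY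

end
end
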